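/- arXiv:1508.04844 — 9 statements merged into one kernel-verified Lean document; each statement's English description precedes it below -/
import Mathlib

section
/- For all natural numbers n, i, j with i + j \le 2n - 1: \sum_{k=0}^{n} \binom{2n}{2k} \binom{2k}{i} \binom{2n-2k}{j} = \binom{2n}{i} \binom{2n-i}{j} 2^{2n-i-j-1}. -/
/-!
Trinomial revision turns each summand into `C(2n, i) C(2n-i, j) C(m, 2k-i)` with `m = 2n-i-j`,
so the sum is `C(2n, i) C(2n-i, j)` times the sum of the binomial coefficients `C(m, t)` with
`t ≡ i (mod 2)`. By Pascal's rule each such sum equals the full row sum `2 ^ (m - 1)` of the row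
above, since `m ≥ 1`.
-/

open Finset

namespace Nat

theorem choose_mul_choose_sub_comm (p b j : ℕ) :
    p.choose b * (p - b).choose j = p.choose j * (p - j).choose b := by
  have hb := choose_mul (n := p) (Nat.le_add_right b j)
  have hj := choose_mul (n := p) (Nat.le_add_left j b)
  rw [Nat.add_sub_cancel_left] at hb
  rw [Nat.add_sub_cancel] at hj
  rw [← hb, ← hj, choose_symm_add]

theorem choose_mul_choose_mul_choose_sub (n a i j : ℕ) :
    n.choose a * a.choose i * (n - a).choose j =
      n.choose i * (n - i).choose j * if i ≤ a then (n - i - j).choose (a - i) else 0 := by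
  split_ifs with hia
  · calc n.choose a * a.choose i * (n - a).choose j
        = n.choose i * ((n - i).choose (a - i) * (n - i - (a - i)).choose j) := by
          rw [choose_mul hia, show n - i - (a - i) = n - a by omega, mul_assoc]
      _ = n.choose i * (n - i).choose j * (n - i - j).choose (a - i) := by
          rw [choose_mul_choose_sub_comm, mul_assoc]
  · rw [choose_eq_zero_of_lt (by omega : a < i)]
    simp

theorem sum_range_choose_of_lt {m N : ℕ} (h : m < N) :
    ∑ t ∈ range N, m.choose t = 2 ^ m := by
  rw [← sum_range_choose m]
  refine (sum_subset (range_subset_range.2 h) fun t ht hnt => ?_).symm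
  rw [mem_range] at ht hnt
  exact choose_eq_zero_of_lt (by omega)

theorem sum_range_choose_succ_two_mul (m N : ℕ) :
    ∑ k ∈ range (N + 1), (m + 1).choose (2 * k) = ∑ t ∈ range (2 * N + 1), m.choose t := by
  induction N with
  | zero => simp
  | succ N ih =>
    rw [sum_range_succ, ih, show 2 * (N + 1) = 2 * N + 1 + 1 by ring, choose_succ_succ',
      sum_range_succ _ (2 * N + 1 + 1), sum_range_succ _ (2 * N + 1)]
    ring

theorem sum_range_choose_succ_two_mul_add_one (m N : ℕ) :
    ∑ k ∈ range N, (m + 1).choose (2 * k + 1) = ∑ t ∈ range (2 * N), m.choose t := by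
  induction N with
  | zero => simp
  | succ N ih =>
    rw [sum_range_succ, ih, choose_succ_succ', show 2 * (N + 1) = 2 * N + 1 + 1 by ring,
      sum_range_succ _ (2 * N + 1), sum_range_succ, add_assoc]

theorem sum_range_choose_two_mul_sub {m i N : ℕ} (h : i + m < 2 * N) :
    ∑ k ∈ range (N + 1), (if i ≤ 2 * k then (m + 1).choose (2 * k - i) else 0) = 2 ^ m := by
  induction i using Nat.twoStepInduction generalizing N with
  | zero =>
    simp only [Nat.zero_le, if_true, Nat.sub_zero]
    rw [sum_range_choose_succ_two_mul, sum_range_choose_of_lt (by omega)]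
  | one =>
    rw [sum_range_succ', if_neg (by omega), add_zero]
    simp only [mul_add, mul_one, le_add_iff_nonneg_left, zero_le, ↓reduceIte, Nat.add_one_sub_one]
    rw [sum_range_choose_succ_two_mul_add_one, sum_range_choose_of_lt (by omega)]
  | more i ih _ =>
    obtain ⟨N, rfl⟩ : ∃ N', N = N' + 1 := ⟨N - 1, by omega⟩
    rw [sum_range_succ', if_neg (by omega), add_zero, ← ih (N := N) (by omega)]
    simp only [mul_add, mul_one, add_le_add_iff_right, Nat.reduceSubDiff]

end Nat

theorem sum_even_binomials (n i j : ℕ) (h : i + j + 1 ≤ 2 * n) :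
    ∑ k ∈ Finset.range (n + 1),
        (2 * n).choose (2 * k) * (2 * k).choose i * (2 * n - 2 * k).choose j =
      (2 * n).choose i * (2 * n - i).choose j * 2 ^ (2 * n - i - j - 1) := by
  simp_rw [Nat.choose_mul_choose_mul_choose_sub, ← mul_sum]
  obtain ⟨m, hm⟩ : ∃ m, 2 * n - i - j = m + 1 := ⟨_, (Nat.sub_add_cancel (by omega)).symm⟩
  rw [hm, Nat.add_sub_cancel, Nat.sum_range_choose_two_mul_sub (by omega)]
end

section
/- For all natural numbers n: \sum_{k=0}^{n} \binom{2n}{2k} \binom{2k}{n} \binom{2n-2k}{n} = (1/2) \binom{2n}{n} (1 + (-1)^n). -/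
lemma term_zero (n k : ℕ) (hk : k ≤ n) (h : 2 * k ≠ n) :
    ((2 * n).choose (2 * k) * (2 * k).choose n * (2 * n - 2 * k).choose n : ℚ) = 0 := by
  rcases lt_or_gt_of_ne h with hlt | hgt
  · rw [Nat.choose_eq_zero_of_lt hlt]; ring
  · rw [Nat.choose_eq_zero_of_lt (by omega : 2 * n - 2 * k < n)]; ring

theorem sum_even_binomials_middle (n : ℕ) :
    ∑ k ∈ Finset.range (n + 1),
        ((2 * n).choose (2 * k) * (2 * k).choose n * (2 * n - 2 * k).choose n : ℚ) =
      (1 / 2) * ((2 * n).choose n : ℚ) * (1 + (-1 : ℚ) ^ n) := by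
  rcases Nat.even_or_odd n with ⟨m, hm⟩ | ⟨m, hm⟩
  · subst hm
    rw [Finset.sum_eq_single m]
    · have h1 : 2 * m = m + m := by ring
      have h2 : 2 * (m + m) - 2 * m = m + m := by omega
      rw [h1, Nat.choose_self, (show 2 * (m + m) - (m + m) = m + m by omega),
        Nat.choose_self, Even.neg_one_pow ⟨m, rfl⟩]
      push_cast; ring
    · intro k hk' hk
      have := Finset.mem_range_succ_iff.mp hk'
      exact term_zero (m + m) k (by omega) (by omega)
    · intro h; exact absurd (Finset.mem_range.mpr (by omega)) h
  · have : ∀ k ∈ Finset.range (n + 1),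
        ((2 * n).choose (2 * k) * (2 * k).choose n * (2 * n - 2 * k).choose n : ℚ) = 0 := by
      intro k hk'
      have := Finset.mem_range_succ_iff.mp hk'
      exact term_zero n k (by omega) (by omega)
    rw [Finset.sum_eq_zero this, hm, Odd.neg_one_pow ⟨m, rfl⟩]
    ring
end

section
/- For 1 \le s \le 2n - 1: \sum_{l=0}^{s} \sum_{k=0}^{n} \binom{2n}{2k} \binom{2k}{l} \binom{2n-2k}{s-l} (-1)^{s-l} = 0, while for s = 0 and s = 2n the same double sum equals 2^{2n-1}. -/
open Finset Polynomial

private lemma sum_range_even_odd {M : Type*} [AddCommMonoid M] (f : ℕ → M) (n : ℕ) :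
    ∑ j ∈ range (2 * n + 1), f j
      = ∑ i ∈ range (n + 1), f (2 * i) + ∑ i ∈ range n, f (2 * i + 1) := by
  induction n with
  | zero => simp
  | succ n ih =>
      have h1 : 2 * (n + 1) + 1 = (2 * n + 1) + 1 + 1 := by ring
      rw [h1, sum_range_succ, sum_range_succ, ih, sum_range_succ (fun i => f (2 * i)) (n + 1),
        sum_range_succ (fun i => f (2 * i + 1)) n]
      have e1 : 2 * n + 1 + 1 = 2 * (n + 1) := by ring
      rw [e1]
      abel

private lemma even_sub_nat {m n : ℕ} (h : Even m) (h2 : Even n) : Even (m - n) := by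
  obtain ⟨a, rfl⟩ := h; obtain ⟨b, rfl⟩ := h2; exact ⟨a - b, by omega⟩

private lemma neg_one_pow_sub_choose (m j : ℕ) (hm : Even m) :
    ((-1 : ℤ)) ^ (m - j) * (m.choose j) = (-1) ^ j * (m.choose j) := by
  rcases le_or_gt j m with h | h
  · congr 1
    rcases Nat.even_or_odd j with hj | hj
    · rw [(even_sub_nat hm hj).neg_one_pow, hj.neg_one_pow]
    · rw [(Nat.Even.sub_odd h hm hj).neg_one_pow, hj.neg_one_pow]
  · simp [Nat.choose_eq_zero_of_lt h]

private lemma two_mul_poly (n : ℕ) :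
    2 * (∑ k ∈ range (n + 1),
        C (((2 * n).choose (2 * k) : ℤ)) * ((X + 1) ^ (2 * k) * (X - 1) ^ (2 * n - 2 * k)))
      = C ((2 : ℤ) ^ (2 * n)) * X ^ (2 * n) + C ((2 : ℤ) ^ (2 * n)) := by
  have key : ((X + 1) + (X - 1) : ℤ[X]) ^ (2 * n) + ((X + 1) - (X - 1)) ^ (2 * n)
      = 2 * (∑ k ∈ range (n + 1),
        C (((2 * n).choose (2 * k) : ℤ)) * ((X + 1) ^ (2 * k) * (X - 1) ^ (2 * n - 2 * k))) := by
    rw [add_pow, sub_eq_add_neg (X + 1) (X - 1), add_pow]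
    rw [← Finset.sum_add_distrib]
    have : ∀ j ∈ range (2 * n + 1),
        (X + 1 : ℤ[X]) ^ j * (X - 1) ^ (2 * n - j) * ((2 * n).choose j : ℤ[X])
          + (X + 1) ^ j * (-(X - 1)) ^ (2 * n - j) * ((2 * n).choose j : ℤ[X])
        = (X + 1) ^ j * (X - 1) ^ (2 * n - j) * ((2 * n).choose j : ℤ[X])
            * (1 + (-1) ^ (2 * n - j)) := by
      intro j hj
      rw [neg_pow]
      ring
    rw [Finset.sum_congr rfl this, sum_range_even_odd
      (fun j => (X + 1 : ℤ[X]) ^ j * (X - 1) ^ (2 * n - j) * ((2 * n).choose j : ℤ[X])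
          * (1 + (-1) ^ (2 * n - j))) n]
    have hodd : ∀ i ∈ range n,
        (X + 1 : ℤ[X]) ^ (2 * i + 1) * (X - 1) ^ (2 * n - (2 * i + 1))
          * ((2 * n).choose (2 * i + 1) : ℤ[X]) * (1 + (-1) ^ (2 * n - (2 * i + 1))) = 0 := by
      intro i hi
      rw [mem_range] at hi
      have : Odd (2 * n - (2 * i + 1)) :=
        Nat.Even.sub_odd (by omega) (even_two_mul n) (odd_two_mul_add_one i)
      rw [this.neg_one_pow]
      ring
    rw [Finset.sum_eq_zero hodd, add_zero, Finset.mul_sum]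
    refine Finset.sum_congr rfl fun i hi => ?_
    have : Even (2 * n - 2 * i) := even_sub_nat (even_two_mul n) (even_two_mul i)
    rw [this.neg_one_pow]
    simp only [Polynomial.C_eq_natCast]
    ring
  rw [← key]
  have h1 : ((X + 1) + (X - 1) : ℤ[X]) = C 2 * X := by
    have : (C (2:ℤ)) = 2 := by norm_num
    rw [this]; ring
  have h2 : ((X + 1) - (X - 1) : ℤ[X]) = C 2 := by
    have : (C (2:ℤ)) = 2 := by norm_num
    rw [this]; ring
  rw [h1, h2, mul_pow, ← C_pow]

private lemma coeff_eval (n s : ℕ) :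
    (∑ l ∈ range (s + 1), ∑ k ∈ range (n + 1),
        ((2 * n).choose (2 * k) * (2 * k).choose l * (2 * n - 2 * k).choose (s - l) : ℤ) *
          (-1 : ℤ) ^ (s - l))
      = (∑ k ∈ range (n + 1),
        C (((2 * n).choose (2 * k) : ℤ)) * ((X + 1) ^ (2 * k) * (X - 1) ^ (2 * n - 2 * k))).coeff s := by
  rw [finset_sum_coeff, Finset.sum_comm]
  refine Finset.sum_congr rfl fun k hk => ?_
  rw [coeff_C_mul, coeff_mul, Nat.sum_antidiagonal_eq_sum_range_succ_mk, Finset.mul_sum]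
  refine Finset.sum_congr rfl fun l hl => ?_
  have e1 : (X + 1 : ℤ[X]) = X + C 1 := by norm_num
  have e2 : (X - 1 : ℤ[X]) = X + C (-1) := by rw [map_neg, C_1, ← sub_eq_add_neg]
  rw [e1, e2, coeff_X_add_C_pow, coeff_X_add_C_pow, one_pow]
  have := neg_one_pow_sub_choose (2 * n - 2 * k) (s - l) ⟨n - k, by omega⟩
  push_cast
  rw [this]
  ring

theorem alternating_double_binomial_sum (n : ℕ) (hn : 1 ≤ n) :
    (∀ s : ℕ, 1 ≤ s → s ≤ 2 * n - 1 →
      ∑ l ∈ Finset.range (s + 1), ∑ k ∈ Finset.range (n + 1),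
          ((2 * n).choose (2 * k) * (2 * k).choose l * (2 * n - 2 * k).choose (s - l) : ℤ) *
            (-1 : ℤ) ^ (s - l) = 0) ∧
    (∑ l ∈ Finset.range (0 + 1), ∑ k ∈ Finset.range (n + 1),
        ((2 * n).choose (2 * k) * (2 * k).choose l * (2 * n - 2 * k).choose (0 - l) : ℤ) *
          (-1 : ℤ) ^ (0 - l) = 2 ^ (2 * n - 1)) ∧
    (∑ l ∈ Finset.range (2 * n + 1), ∑ k ∈ Finset.range (n + 1),
        ((2 * n).choose (2 * k) * (2 * k).choose l * (2 * n - 2 * k).choose (2 * n - l) : ℤ) *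
          (-1 : ℤ) ^ (2 * n - l) = 2 ^ (2 * n - 1)) := by
  have hmain : ∀ s : ℕ,
      2 * (∑ l ∈ Finset.range (s + 1), ∑ k ∈ Finset.range (n + 1),
        ((2 * n).choose (2 * k) * (2 * k).choose l * (2 * n - 2 * k).choose (s - l) : ℤ) *
          (-1 : ℤ) ^ (s - l))
      = (if s = 2 * n then (2 : ℤ) ^ (2 * n) else 0)
        + (if s = 0 then (2 : ℤ) ^ (2 * n) else 0) := by
    intro s
    rw [coeff_eval n s]
    have h2 : (2 : ℤ[X]) = C 2 := by norm_num
    calc (2 : ℤ) * (∑ k ∈ range (n + 1),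
          C (((2 * n).choose (2 * k) : ℤ))
            * ((X + 1) ^ (2 * k) * (X - 1) ^ (2 * n - 2 * k))).coeff s
        = (2 * ∑ k ∈ range (n + 1),
            C (((2 * n).choose (2 * k) : ℤ))
              * ((X + 1) ^ (2 * k) * (X - 1) ^ (2 * n - 2 * k))).coeff s := by
          rw [h2, coeff_C_mul]
      _ = _ := by
          rw [two_mul_poly n, Polynomial.coeff_add, coeff_C_mul, coeff_X_pow, coeff_C]
          by_cases hs : s = 2 * n <;> by_cases hs0 : s = 0 <;>
            simp [hs, hs0, eq_comm]
  have hpow : (2 : ℤ) ^ (2 * n) = 2 * 2 ^ (2 * n - 1) := by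
    rw [← pow_succ']
    congr 1
    omega
  refine ⟨fun s hs1 hs2 => ?_, ?_, ?_⟩
  · have := hmain s
    rw [if_neg (by omega), if_neg (by omega), add_zero] at this
    omega
  · have := hmain 0
    rw [if_neg (by omega), if_pos rfl, zero_add, hpow] at this
    simp only [Nat.zero_add] at this ⊢
    omega
  · have := hmain (2 * n)
    rw [if_pos rfl, if_neg (by omega), add_zero, hpow] at this
    omega
end

section
/- For the n-th Hermite function \psi_n(x) = (-1)^n (2^n n! \sqrt{\pi})^{-1/2} e^{x^2/2} (d/dx)^n e^{-x^2}, the Hamiltonian H = (1/2)(x^2 - d^2/dx^2) satisfies H\psi_n = (n + 1/2)\psi_n. -/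
/-!
Differentiating `p(x) e^{-a x²}` gives `(p' - 2a X p)(x) e^{-a x²}`, so by induction the `n`-th
derivative of `e^{-x²}` is `(-1)ⁿ Hₙ(x) e^{-x²}` for the physicists' Hermite polynomials
`Hₙ₊₁ = 2X Hₙ - Hₙ'`, and `ψₙ = cₙ Hₙ e^{-x²/2}`. For `f = p e^{-x²/2}` one computes
`x² f - f'' = (2X p' - p'' + p) e^{-x²/2}`, and `Hₙ` satisfies Hermite's equation
`Hₙ'' = 2X Hₙ' - 2n Hₙ`, a consequence of `Hₙ₊₁' = 2(n+1) Hₙ`.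
-/

/-- The `n`-th Hermite function, via the Rodrigues formula. -/
noncomputable def hermiteFun (n : ℕ) : ℝ → ℝ := fun x =>
  (-1 : ℝ) ^ n * (Real.sqrt (2 ^ n * n.factorial * Real.sqrt Real.pi))⁻¹ *
    Real.exp (x ^ 2 / 2) * iteratedDeriv n (fun t => Real.exp (-t ^ 2)) x

open Polynomial Real

noncomputable def physHermite : ℕ → ℝ[X]
  | 0 => 1
  | n + 1 => 2 * X * physHermite n - derivative (physHermite n)

lemma physHermite_succ (n : ℕ) :
    physHermite (n + 1) = 2 * X * physHermite n - derivative (physHermite n) := rfl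

lemma derivative_physHermite_succ (n : ℕ) :
    derivative (physHermite (n + 1)) = 2 * ((n : ℝ[X]) + 1) * physHermite n := by
  induction n with
  | zero => simp [physHermite]
  | succ n ih =>
    rw [physHermite_succ (n + 1), derivative_sub, derivative_mul, ih, derivative_mul,
      physHermite_succ n]
    simp only [derivative_mul, derivative_ofNat, derivative_X, derivative_natCast,
      derivative_add, derivative_one]
    push_cast
    ring

lemma derivative_derivative_physHermite (n : ℕ) :
    derivative (derivative (physHermite n)) =
      2 * X * derivative (physHermite n) - 2 * (n : ℝ[X]) * physHermite n := by
  cases n with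
  | zero => simp [physHermite]
  | succ n =>
    rw [derivative_physHermite_succ, derivative_mul, physHermite_succ n]
    simp only [derivative_mul, derivative_ofNat, derivative_natCast, derivative_add,
      derivative_one]
    push_cast
    ring

lemma hasDerivAt_eval_mul_exp_neg_mul_sq (p : ℝ[X]) (a x : ℝ) :
    HasDerivAt (fun t => p.eval t * exp (-a * t ^ 2))
      ((derivative p - C (2 * a) * X * p).eval x * exp (-a * x ^ 2)) x := by
  have hexp : HasDerivAt (fun t => exp (-a * t ^ 2)) (exp (-a * x ^ 2) * (-a * (2 * x))) x := by
    simpa using ((hasDerivAt_pow 2 x).const_mul (-a)).exp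
  refine ((p.hasDerivAt x).fun_mul hexp).congr_deriv ?_
  simp only [eval_sub, eval_mul, eval_C, eval_X]
  ring

lemma deriv_eval_mul_exp_neg_mul_sq (p : ℝ[X]) (a : ℝ) :
    deriv (fun t => p.eval t * exp (-a * t ^ 2)) =
      fun x => (derivative p - C (2 * a) * X * p).eval x * exp (-a * x ^ 2) :=
  funext fun x => (hasDerivAt_eval_mul_exp_neg_mul_sq p a x).deriv

lemma iteratedDeriv_exp_neg_sq (n : ℕ) :
    iteratedDeriv n (fun t => exp (-t ^ 2)) =
      fun x => (C ((-1) ^ n) * physHermite n).eval x * exp (-1 * x ^ 2) := by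
  induction n with
  | zero => simp [physHermite]
  | succ n ih =>
    rw [iteratedDeriv_succ, ih, deriv_eval_mul_exp_neg_mul_sq, physHermite_succ]
    funext x
    simp only [derivative_C_mul, eval_sub, eval_mul, eval_C, eval_X, eval_ofNat]
    ring

lemma iteratedDeriv_two_eval_mul_exp_neg_half_sq (p : ℝ[X]) :
    iteratedDeriv 2 (fun t => p.eval t * exp (-(1 / 2) * t ^ 2)) = fun x =>
      (derivative (derivative p) - 2 * X * derivative p + (X ^ 2 - 1) * p).eval x *
        exp (-(1 / 2) * x ^ 2) := by
  rw [iteratedDeriv_succ, iteratedDeriv_one, deriv_eval_mul_exp_neg_mul_sq,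
    deriv_eval_mul_exp_neg_mul_sq]
  funext x
  simp only [derivative_sub, derivative_mul, derivative_C, derivative_X, eval_sub, eval_add,
    eval_mul, eval_pow, eval_C, eval_X, eval_one, eval_zero, eval_ofNat]
  ring

lemma harmonicOscillator_eval_mul_exp_neg_half_sq {p : ℝ[X]} {l : ℝ}
    (hp : derivative (derivative p) = 2 * X * derivative p - C (2 * l) * p) (x : ℝ) :
    (1 / 2) * (x ^ 2 * (p.eval x * exp (-(1 / 2) * x ^ 2)) -
      iteratedDeriv 2 (fun t => p.eval t * exp (-(1 / 2) * t ^ 2)) x) =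
      (l + 1 / 2) * (p.eval x * exp (-(1 / 2) * x ^ 2)) := by
  rw [iteratedDeriv_two_eval_mul_exp_neg_half_sq, hp]
  simp only [eval_sub, eval_add, eval_mul, eval_pow, eval_C, eval_X, eval_one, eval_ofNat]
  ring

lemma hermiteFun_eq (n : ℕ) :
    hermiteFun n = fun x => (C (√(2 ^ n * n.factorial * √π))⁻¹ * physHermite n).eval x *
      exp (-(1 / 2) * x ^ 2) := by
  funext x
  have hexp : exp (x ^ 2 / 2) * exp (-1 * x ^ 2) = exp (-(1 / 2) * x ^ 2) := by
    rw [← exp_add]; ring_nf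
  have hsign : (-1 : ℝ) ^ n * (-1) ^ n = 1 := by rw [← mul_pow]; norm_num
  rw [hermiteFun, iteratedDeriv_exp_neg_sq]
  simp only [eval_mul, eval_C]
  linear_combination (√(2 ^ n * n.factorial * √π))⁻¹ * (physHermite n).eval x *
    ((-1) ^ n * (-1) ^ n * hexp + exp (-(1 / 2) * x ^ 2) * hsign)

theorem hamiltonian_hermiteFun (n : ℕ) (x : ℝ) :
    (1 / 2) * (x ^ 2 * hermiteFun n x - iteratedDeriv 2 (hermiteFun n) x) =
      ((n : ℝ) + 1 / 2) * hermiteFun n x := by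
  rw [hermiteFun_eq]
  refine harmonicOscillator_eval_mul_exp_neg_half_sq ?_ x
  simp only [derivative_C_mul, derivative_derivative_physHermite, C_mul, map_ofNat, map_natCast]
  ring
end

section
/- Let p, q be elements of an associative algebra over \mathbb{C} with pq - qp = c for a central scalar c. Then for all m, n \ge 0: [p^n/n!, q^m/m!] = -\sum_{k=1}^{\min(m,n)} c^k (E_k(0)/k!) {p^{n-k}/(n-k)!, q^{m-k}/(m-k)!}, where E_k(0) is the k-th Euler polynomial evaluated at 0. -/
open Finset Polynomial

noncomputable def eulerPoly : ℕ → Polynomial ℚ :=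
  WellFounded.fix Nat.lt_wfRel.wf fun n E =>
    Polynomial.X ^ n - Polynomial.C (1/2 : ℚ) *
      ∑ k : Fin n, Polynomial.C (n.choose k : ℚ) * E k k.2

lemma eulerPoly_def (n : ℕ) : eulerPoly n =
    X ^ n - C (1/2 : ℚ) * ∑ k : Fin n, C (n.choose k : ℚ) * eulerPoly k := by
  rw [eulerPoly, WellFounded.fix_eq]

noncomputable def eNum (n : ℕ) : ℚ := (eulerPoly n).eval 0

lemma eNum_zero : eNum 0 = 1 := by
  rw [eNum, eulerPoly_def]; simp

lemma eNum_rec (n : ℕ) (hn : 1 ≤ n) :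
    eNum n = -(1/2) * ∑ k ∈ range n, (n.choose k : ℚ) * eNum k := by
  have : (eulerPoly n).eval 0 =
      (0:ℚ) ^ n - (1/2) * ∑ k ∈ range n, (n.choose k : ℚ) * (eulerPoly k).eval 0 := by
    rw [eulerPoly_def]
    simp only [eval_sub, eval_pow, eval_X, eval_mul, eval_C, eval_finset_sum]
    rw [← Fin.sum_univ_eq_sum_range (fun k => (n.choose k : ℚ) * (eulerPoly k).eval 0) n]
  rw [eNum, this, zero_pow (by omega)]
  simp [eNum]

lemma euler_sum (n : ℕ) (hn : 1 ≤ n) :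
    ∑ k ∈ range (n+1), (n.choose k : ℚ) * eNum k = - eNum n := by
  rw [Finset.sum_range_succ, Nat.choose_self]
  have := eNum_rec n hn
  have h2 : ∑ k ∈ range n, (n.choose k : ℚ) * eNum k = -2 * eNum n := by
    linarith
  rw [h2]; push_cast; ring

lemma sum_range_succ_eq_Icc {M : Type*} [AddCommMonoid M] (f : ℕ → M) (N : ℕ) :
    ∑ k ∈ range (N+1), f k = f 0 + ∑ k ∈ Icc 1 N, f k := by
  have hs : range (N+1) = insert 0 (Icc 1 N) := by
    ext x; simp [Finset.mem_insert]; omega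
  rw [hs, Finset.sum_insert (by simp)]

section
variable {A : Type*} [Ring A] [Algebra ℂ A] (p q : A) (c : ℂ)
  (h : p * q - q * p = algebraMap ℂ A c)

local notation "r" => algebraMap ℂ A c

include h in
lemma pow_mul_q : ∀ n : ℕ, p ^ n * q = q * p ^ n + n • (r * p ^ (n - 1))
  | 0 => by simp
  | (n+1) => by
    have hpq : p * q = q * p + r := by rw [← h]; noncomm_ring
    have ih := pow_mul_q n
    have hr : ∀ x : A, x * r = r * x := fun x => (Algebra.commutes c x).symm
    rcases Nat.eq_zero_or_pos n with hn | hn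
    · subst hn; simp [hpq]
    · have hp : p ^ (n-1) * p = p ^ n := by
        rw [← pow_succ]; congr 1; omega
      calc p ^ (n+1) * q = p ^ n * (p * q) := by rw [pow_succ, mul_assoc]
        _ = p ^ n * q * p + p ^ n * r := by rw [hpq]; noncomm_ring
        _ = (q * p ^ n + n • (r * p ^ (n-1))) * p + r * p ^ n := by rw [ih, hr]
        _ = q * p ^ (n+1) + n • (r * p ^ n) + r * p ^ n := by
            simp only [add_mul, smul_mul_assoc, mul_assoc, hp, ← pow_succ]
        _ = q * p ^ (n+1) + (n+1) • (r * p ^ (n+1-1)) := by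
            simp [add_smul, add_assoc]

include h in
lemma key_step (n m k : ℕ) (hk : k ≤ m) :
    (r ^ k * (q ^ (m-k) * p ^ (n-k))) * q =
      r ^ k * (q ^ (m+1-k) * p ^ (n-k)) +
      (n-k) • (r ^ (k+1) * (q ^ (m-k) * p ^ (n-(k+1)))) := by
  have hrq : ∀ x : A, x * r = r * x := fun x => (Algebra.commutes c x).symm
  have e2 : m - k + 1 = m + 1 - k := by omega
  have e3 : n - k - 1 = n - (k+1) := by omega
  calc (r ^ k * (q ^ (m-k) * p ^ (n-k))) * q
      = r ^ k * (q ^ (m-k) * (p ^ (n-k) * q)) := by rw [mul_assoc, mul_assoc]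
    _ = r ^ k * (q ^ (m-k) * (q * p ^ (n-k))) +
        (n-k) • (r ^ k * (q ^ (m-k) * (r * p ^ (n-k-1)))) := by
        rw [pow_mul_q p q c h (n-k), mul_add, mul_add, mul_smul_comm, mul_smul_comm]
    _ = r ^ k * (q ^ (m+1-k) * p ^ (n-k)) +
        (n-k) • (r ^ (k+1) * (q ^ (m-k) * p ^ (n-(k+1)))) := by
        congr 2
        · rw [← mul_assoc (q ^ (m-k)), ← pow_succ, e2]
        · rw [← mul_assoc (q ^ (m-k)), hrq, pow_succ, mul_assoc, mul_assoc, e3]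

include h in
lemma normal_order (n : ℕ) : ∀ m : ℕ, p ^ n * q ^ m =
    ∑ k ∈ range (m+1), (n.choose k * m.choose k * k.factorial) •
      ((algebraMap ℂ A) c ^ k * (q ^ (m-k) * p ^ (n-k)))
  | 0 => by simp
  | (m+1) => by
    have ih := normal_order n m
    have step1 : p ^ n * q ^ (m+1) =
        ∑ k ∈ range (m+1), (n.choose k * m.choose k * k.factorial) •
          (r ^ k * (q ^ (m+1-k) * p ^ (n-k)))
        + ∑ k ∈ range (m+1), (n.choose k * m.choose k * k.factorial * (n-k)) •
          (r ^ (k+1) * (q ^ (m-k) * p ^ (n-(k+1)))) := by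
      have hmul : p ^ n * q ^ (m+1) = (p ^ n * q ^ m) * q := by
        rw [mul_assoc, ← pow_succ]
      rw [hmul, ih, Finset.sum_mul, ← Finset.sum_add_distrib]
      refine Finset.sum_congr rfl fun k hk => ?_
      have hk' : k ≤ m := by simp at hk; omega
      rw [smul_mul_assoc, key_step p q c h n m k hk', smul_add, smul_smul]
    have hco : ∀ k, n.choose (k+1) * (m+1).choose (k+1) * (k+1).factorial
        = n.choose (k+1) * m.choose (k+1) * (k+1).factorial
          + n.choose k * m.choose k * k.factorial * (n-k) := by
      intro k
      have h1 : n.choose (k+1) * (k+1) = n.choose k * (n-k) :=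
        Nat.choose_succ_right_eq n k
      rw [Nat.choose_succ_succ, Nat.factorial_succ]
      zify at h1 ⊢
      linear_combination ((m.choose k : ℤ) * k.factorial) * h1
    rw [step1]
    symm
    rw [Finset.sum_range_succ']
    simp only [Nat.succ_sub_succ, Nat.choose_zero_right, Nat.sub_zero, pow_zero,
      one_mul, Nat.factorial_zero, mul_one, one_smul, one_nsmul]
    simp only [hco, add_smul, Finset.sum_add_distrib]
    have hsum1 : ∑ k ∈ range (m+1), (n.choose k * m.choose k * k.factorial) •
          (r ^ k * (q ^ (m+1-k) * p ^ (n-k)))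
        = ∑ k ∈ range (m+1), (n.choose (k+1) * m.choose (k+1) * (k+1).factorial) •
            (r ^ (k+1) * (q ^ (m-k) * p ^ (n-(k+1)))) + q ^ (m+1) * p ^ n := by
      rw [Finset.sum_range_succ' (fun k => (n.choose k * m.choose k * k.factorial) •
          (r ^ k * (q ^ (m+1-k) * p ^ (n-k)))) m]
      simp only [Nat.succ_sub_succ, Nat.choose_zero_right, Nat.sub_zero, pow_zero,
        one_mul, Nat.factorial_zero, mul_one, one_smul, one_nsmul]
      congr 1
      rw [Finset.sum_range_succ]
      simp [Nat.choose_succ_self]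
    rw [hsum1]
    abel

include h in
lemma shrink (a b : ℕ) : p ^ a * q ^ b =
    ∑ k ∈ range (min b a + 1),
      ((a.choose k * b.choose k * k.factorial : ℕ) : ℂ) •
        (c ^ k • (q ^ (b-k) * p ^ (a-k))) := by
  have hck : ∀ (j : ℕ) (x : A), r ^ j * x = c ^ j • x := fun j x => by
    rw [← map_pow, ← Algebra.smul_def]
  have h1 : p ^ a * q ^ b = ∑ k ∈ range (b+1),
      ((a.choose k * b.choose k * k.factorial : ℕ) : ℂ) •
        (c ^ k • (q ^ (b-k) * p ^ (a-k))) := by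
    rw [normal_order p q c h a b]
    exact Finset.sum_congr rfl fun k _ => by
      rw [hck, ← Nat.cast_smul_eq_nsmul ℂ]
  rw [h1]
  symm
  apply Finset.sum_subset (Finset.range_subset_range.2 (by omega : min b a + 1 ≤ b + 1))
  intro x hx hnx
  simp only [Finset.mem_range] at hx hnx
  have : a.choose x = 0 := Nat.choose_eq_zero_of_lt (by omega)
  simp [this]

end

theorem pain_commutator_identity {A : Type*} [Ring A] [Algebra ℂ A]
    (p q : A) (c : ℂ) (hc : c ≠ 0) (h : p * q - q * p = algebraMap ℂ A c)
    (m n : ℕ) :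
    (((n.factorial : ℂ) * (m.factorial : ℂ))⁻¹) • (p ^ n * q ^ m - q ^ m * p ^ n) =
      - ∑ k ∈ Finset.Icc 1 (min m n),
          (c ^ k * (((eulerPoly k).eval 0 : ℚ) : ℂ) /
              ((k.factorial : ℂ) * ((n - k).factorial : ℂ) * ((m - k).factorial : ℂ))) •
            (p ^ (n - k) * q ^ (m - k) + q ^ (m - k) * p ^ (n - k)) := by
  have hNn : min m n ≤ n := min_le_right m n
  have hNm : min m n ≤ m := min_le_left m n
  set N := min m n with hNdef
  have hfac : ∀ j : ℕ, (j.factorial : ℂ) ≠ 0 := fun j =>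
    Nat.cast_ne_zero.2 (Nat.factorial_ne_zero j)
  -- LHS
  have hL : (((n.factorial : ℂ) * (m.factorial : ℂ))⁻¹) • (p ^ n * q ^ m - q ^ m * p ^ n)
      = ∑ t ∈ Icc 1 N, (c ^ t / ((t.factorial:ℂ) * ((n-t).factorial:ℂ) * ((m-t).factorial:ℂ))) •
          (q ^ (m-t) * p ^ (n-t)) := by
    rw [shrink p q c h n m, smul_sub, Finset.smul_sum]
    have hterm : ∀ t ∈ range (N+1),
        (((n.factorial : ℂ) * (m.factorial : ℂ))⁻¹) •
          (((n.choose t * m.choose t * t.factorial : ℕ):ℂ) • (c ^ t • (q ^ (m-t) * p ^ (n-t))))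
        = (c ^ t / ((t.factorial:ℂ) * ((n-t).factorial:ℂ) * ((m-t).factorial:ℂ))) •
            (q ^ (m-t) * p ^ (n-t)) := by
      intro t ht
      simp only [Finset.mem_range] at ht
      rw [smul_smul, smul_smul]
      congr 1
      have h1 : (n.choose t : ℂ) * t.factorial * (n-t).factorial = n.factorial := by
        exact_mod_cast Nat.choose_mul_factorial_mul_factorial (show t ≤ n by omega)
      have h2 : (m.choose t : ℂ) * t.factorial * (m-t).factorial = m.factorial := by
        exact_mod_cast Nat.choose_mul_factorial_mul_factorial (show t ≤ m by omega)
      have hCn : (n.choose t : ℂ) ≠ 0 :=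
        Nat.cast_ne_zero.2 (Nat.choose_pos (show t ≤ n by omega)).ne'
      have hCm : (m.choose t : ℂ) ≠ 0 :=
        Nat.cast_ne_zero.2 (Nat.choose_pos (show t ≤ m by omega)).ne'
      have hD : ((t.factorial:ℂ) * ((n-t).factorial:ℂ) * ((m-t).factorial:ℂ)) ≠ 0 :=
        mul_ne_zero (mul_ne_zero (hfac t) (hfac (n-t))) (hfac (m-t))
      have hnm : ((n.factorial:ℂ) * (m.factorial:ℂ)) ≠ 0 := mul_ne_zero (hfac n) (hfac m)
      rw [eq_div_iff hD, inv_mul_eq_div, div_mul_eq_mul_div, div_mul_eq_mul_div,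
        div_eq_iff hnm]
      push_cast
      linear_combination (c^t * (m.choose t : ℂ) * (t.factorial : ℂ) *
          ((m-t).factorial : ℂ)) * h1 + (c^t * (n.factorial : ℂ)) * h2
    rw [Finset.sum_congr rfl hterm, sum_range_succ_eq_Icc]
    simp only [pow_zero, Nat.sub_zero, Nat.factorial_zero, Nat.cast_one, one_mul]
    rw [one_div, add_sub_cancel_left]
  rw [hL]
  -- RHS expansion term by term
  have hrw : ∀ k ∈ Icc 1 N,
      (c ^ k * (((eulerPoly k).eval 0 : ℚ) : ℂ) /
          ((k.factorial : ℂ) * ((n - k).factorial : ℂ) * ((m - k).factorial : ℂ))) •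
        (p ^ (n - k) * q ^ (m - k) + q ^ (m - k) * p ^ (n - k))
      = (∑ t ∈ Icc k N,
          (c ^ t * (((eulerPoly k).eval 0 : ℚ) : ℂ) /
            ((k.factorial : ℂ) * ((t-k).factorial : ℂ) * ((n - t).factorial : ℂ) *
              ((m - t).factorial : ℂ))) • (q ^ (m - t) * p ^ (n - t)))
        + (c ^ k * (((eulerPoly k).eval 0 : ℚ) : ℂ) /
            ((k.factorial : ℂ) * ((n - k).factorial : ℂ) * ((m - k).factorial : ℂ))) •
          (q ^ (m - k) * p ^ (n - k)) := by
    intro k hk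
    simp only [Finset.mem_Icc] at hk
    rw [smul_add]
    congr 1
    rw [shrink p q c h (n-k) (m-k)]
    have hmin : min (m-k) (n-k) = N - k := by omega
    rw [hmin, Finset.smul_sum]
    conv_rhs => rw [← Finset.Ico_add_one_right_eq_Icc, Finset.sum_Ico_eq_sum_range,
      (show N + 1 - k = N - k + 1 by omega)]
    refine Finset.sum_congr rfl fun j hj => ?_
    simp only [Finset.mem_range] at hj
    have e1 : k + j - k = j := by omega
    have e2 : m - (k+j) = m - k - j := by omega
    have e3 : n - (k+j) = n - k - j := by omega
    rw [e1, e2, e3, smul_smul, smul_smul]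
    congr 1
    have h1 : ((n-k).choose j : ℂ) * j.factorial * (n-k-j).factorial = (n-k).factorial := by
      exact_mod_cast Nat.choose_mul_factorial_mul_factorial (show j ≤ n-k by omega)
    have h2 : ((m-k).choose j : ℂ) * j.factorial * (m-k-j).factorial = (m-k).factorial := by
      exact_mod_cast Nat.choose_mul_factorial_mul_factorial (show j ≤ m-k by omega)
    have hCn : ((n-k).choose j : ℂ) ≠ 0 :=
      Nat.cast_ne_zero.2 (Nat.choose_pos (show j ≤ n-k by omega)).ne'
    have hCm : ((m-k).choose j : ℂ) ≠ 0 :=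
      Nat.cast_ne_zero.2 (Nat.choose_pos (show j ≤ m-k by omega)).ne'
    have hD1 : ((k.factorial : ℂ) * ((n - k).factorial : ℂ) * ((m - k).factorial : ℂ)) ≠ 0 :=
      mul_ne_zero (mul_ne_zero (hfac k) (hfac (n-k))) (hfac (m-k))
    have hD2 : ((k.factorial : ℂ) * (j.factorial : ℂ) * ((n - k - j).factorial : ℂ) *
        ((m - k - j).factorial : ℂ)) ≠ 0 :=
      mul_ne_zero (mul_ne_zero (mul_ne_zero (hfac k) (hfac j)) (hfac (n-k-j))) (hfac (m-k-j))
    rw [pow_add, div_mul_eq_mul_div, div_mul_eq_mul_div, div_eq_div_iff hD1 hD2]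
    push_cast
    linear_combination (c^k * c^j * (((eulerPoly k).eval 0 : ℚ) : ℂ) * (k.factorial : ℂ) *
        (j.factorial : ℂ) * (((m-k).choose j : ℕ) : ℂ) * ((m-k-j).factorial : ℂ)) * h1
      + (c^k * c^j * (((eulerPoly k).eval 0 : ℚ) : ℂ) * (k.factorial : ℂ) *
        ((n-k).factorial : ℂ)) * h2
  rw [Finset.sum_congr rfl hrw, Finset.sum_add_distrib]
  have hswap : ∀ (G : ℕ → ℕ → A), ∑ k ∈ Icc 1 N, ∑ t ∈ Icc k N, G k t
      = ∑ t ∈ Icc 1 N, ∑ k ∈ Icc 1 t, G k t := fun G =>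
    Finset.sum_comm' (fun x y => by simp only [Finset.mem_Icc]; omega)
  rw [hswap, neg_add, ← Finset.sum_neg_distrib, ← Finset.sum_neg_distrib,
    ← Finset.sum_add_distrib]
  refine Finset.sum_congr rfl fun t ht => ?_
  simp only [Finset.mem_Icc] at ht
  rw [← Finset.sum_smul, ← neg_smul, ← neg_smul, ← add_smul]
  congr 1
  -- scalar identity
  have ht1 : 1 ≤ t := ht.1
  have hE : ∑ k ∈ Icc 1 t, (t.choose k : ℂ) * (((eulerPoly k).eval 0 : ℚ) : ℂ)
      = -(((eulerPoly t).eval 0 : ℚ) : ℂ) - 1 := by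
    have hQ := euler_sum t ht1
    rw [sum_range_succ_eq_Icc] at hQ
    simp only [Nat.choose_zero_right, Nat.cast_one, one_mul, eNum_zero] at hQ
    have hQ2 : ∑ k ∈ Icc 1 t, (t.choose k : ℚ) * eNum k = -eNum t - 1 := by linarith
    have := congrArg (fun x : ℚ => (x : ℂ)) hQ2
    push_cast at this
    exact this
  have hterm2 : ∀ k ∈ Icc 1 t,
      c ^ t * (((eulerPoly k).eval 0 : ℚ) : ℂ) /
        ((k.factorial : ℂ) * ((t-k).factorial : ℂ) * ((n - t).factorial : ℂ) *
          ((m - t).factorial : ℂ))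
      = (t.choose k : ℂ) * (((eulerPoly k).eval 0 : ℚ) : ℂ) *
          (c ^ t / ((t.factorial : ℂ) * ((n - t).factorial : ℂ) * ((m - t).factorial : ℂ))) := by
    intro k hk
    simp only [Finset.mem_Icc] at hk
    have h1 : (t.choose k : ℂ) * k.factorial * (t-k).factorial = t.factorial := by
      exact_mod_cast Nat.choose_mul_factorial_mul_factorial (show k ≤ t by omega)
    have hCt : (t.choose k : ℂ) ≠ 0 :=
      Nat.cast_ne_zero.2 (Nat.choose_pos (show k ≤ t by omega)).ne'
    have hD1 : ((k.factorial : ℂ) * ((t-k).factorial : ℂ) * ((n - t).factorial : ℂ) *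
        ((m - t).factorial : ℂ)) ≠ 0 :=
      mul_ne_zero (mul_ne_zero (mul_ne_zero (hfac k) (hfac (t-k))) (hfac (n-t))) (hfac (m-t))
    have hD2 : ((t.factorial : ℂ) * ((n - t).factorial : ℂ) * ((m - t).factorial : ℂ)) ≠ 0 :=
      mul_ne_zero (mul_ne_zero (hfac t) (hfac (n-t))) (hfac (m-t))
    rw [mul_div_assoc', div_eq_div_iff hD1 hD2]
    linear_combination (-(c^t * (((eulerPoly k).eval 0 : ℚ) : ℂ) * ((n-t).factorial : ℂ) *
        ((m-t).factorial : ℂ))) * h1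
  rw [Finset.sum_congr rfl hterm2, ← Finset.sum_mul, hE]
  ring
end

section
/- Let p, q be elements of an associative algebra over \mathbb{C} with pq - qp = c for a central scalar c. Then for all m, n \ge 0: {p^n/n!, q^m/m!} = (2/c)[p^{n+1}/(n+1)!, q^{m+1}/(m+1)!] + 2\sum_{k=1}^{\min(m,n)} (c^k/k!) (B_{k+1}/(k+1)) [p^{n-k}/(n-k)!, q^{m-k}/(m-k)!], where B_j are the Bernoulli numbers. -/
/-!
Write `P⁽ⁿ⁾ = pⁿ/n!` and `Q⁽ᵐ⁾ = qᵐ/m!`. Left multiplication by `p` is right multiplication by `p`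
plus `ad p`; these two operators commute and `ad p` acts on powers of `q` as `c · d/dq`, so the
binomial theorem gives the normal-ordering formula `P⁽ⁿ⁾ Q⁽ᵐ⁾ = ∑ₜ cᵗ/t! Q⁽ᵐ⁻ᵗ⁾ P⁽ⁿ⁻ᵗ⁾`.
Expanding every term of the identity in the normal-ordered monomials `Q⁽ᵐ⁻ᵗ⁾ P⁽ⁿ⁻ᵗ⁾` and
comparing coefficients of `cᵗ` turns it into the power-series identity
`(x/2)(eˣ + 1)/(eˣ - 1) = x/(eˣ - 1) + x/2`, i.e. into the recursion `∑ⱼ C(t+1, j) Bⱼ = 0`.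
-/

open Finset
open scoped Nat

theorem sum_range_choose_bernoulli_add_two (s : ℕ) :
    ∑ i ∈ range s, ((s + 2).choose (i + 2) : ℚ) * bernoulli (i + 2) = s / 2 := by
  have h := sum_bernoulli (s + 2)
  rw [if_neg (by omega), sum_range_succ', sum_range_succ'] at h
  simp only [zero_add, bernoulli_zero, bernoulli_one, Nat.choose_zero_right,
    Nat.choose_one_right] at h
  push_cast at h
  linear_combination h

theorem inv_factorial_eq_bernoulli_sum {K : Type*} [Field K] [CharZero K] {t : ℕ} (ht : 0 < t) :
    (t ! : K)⁻¹ = 2 / (t + 1)!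
      + ∑ k ∈ Ico 1 t, 2 * (bernoulli (k + 1) : K) / (k ! * (k + 1)) / (t - k)! := by
  obtain ⟨s, rfl⟩ : ∃ s, t = s + 1 := ⟨t - 1, by omega⟩
  calc ((s + 1)! : K)⁻¹
      = 2 / (s + 2)! + 2 / (s + 2)!
          * ((∑ i ∈ range s, ((s + 2).choose (i + 2) : ℚ) * bernoulli (i + 2) : ℚ) : K) := by
        rw [sum_range_choose_bernoulli_add_two, Nat.factorial_succ (s + 1)]
        have : ((s + 1)! : K) ≠ 0 := Nat.cast_ne_zero.mpr (Nat.factorial_ne_zero _)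
        have : (s + 1 + 1 : K) ≠ 0 := by exact_mod_cast (s + 1).succ_ne_zero
        push_cast
        field_simp
        ring
    _ = _ := by
        rw [sum_Ico_eq_sum_range, Nat.add_sub_cancel, Rat.cast_sum, mul_sum]
        congr 1
        refine sum_congr rfl fun i hi => ?_
        have hi2 : i + 2 ≤ s + 2 := by simp only [mem_range] at hi; omega
        have hfac : ((s + 2).choose (i + 2) * (i + 2)! * (s - i)! : K) = (s + 2)! := by
          have := Nat.choose_mul_factorial_mul_factorial hi2
          rw [show s + 2 - (i + 2) = s - i by omega] at this
          exact_mod_cast this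
        have hchoose : ((s + 2).choose (i + 2) : K) ≠ 0 := by
          exact_mod_cast (Nat.choose_pos hi2).ne'
        rw [← hfac, show 1 + i + 1 = i + 2 by omega, show s + 1 - (1 + i) = s - i by omega,
          show 1 + i = i + 1 by omega]
        push_cast [Nat.factorial_succ]
        field_simp

theorem pow_div_factorial_eq_bernoulli_sum {K : Type*} [Field K] [CharZero K] {c : K}
    (hc : c ≠ 0) {t : ℕ} (ht : 0 < t) :
    c ^ t / t ! = 2 / c * (c ^ (t + 1) / (t + 1)!) + ∑ k ∈ Ico 1 t,
      2 * c ^ k * (bernoulli (k + 1) : K) / (k ! * (k + 1)) * (c ^ (t - k) / (t - k)!) := by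
  rw [div_eq_mul_inv, inv_factorial_eq_bernoulli_sum ht, mul_add, mul_sum]
  congr 1
  · field_simp
    ring
  · refine sum_congr rfl fun k hk => ?_
    rw [← pow_mul_pow_sub c (mem_Ico.mp hk).2.le]
    ring

section NormalOrdering

variable {R A : Type*} [CommRing R] [Ring A] [Algebra R A] {p q : A} {c : R}

theorem mul_pow_succ_sub_pow_succ_mul (h : p * q - q * p = algebraMap R A c) (m : ℕ) :
    p * q ^ (m + 1) - q ^ (m + 1) * p = ((m + 1 : R) * c) • q ^ m := by
  induction m with
  | zero => simpa [Algebra.algebraMap_eq_smul_one] using h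
  | succ m ih =>
    have hq : p * q ^ (m + 2) - q ^ (m + 2) * p
        = (p * q ^ (m + 1) - q ^ (m + 1) * p) * q + q ^ (m + 1) * (p * q - q * p) := by
      noncomm_ring
    rw [hq, ih, h, Algebra.algebraMap_eq_smul_one, smul_mul_assoc, mul_smul_comm, ← pow_succ,
      mul_one]
    push_cast
    module

theorem mulLeft_sub_mulRight_pow_apply_pow (h : p * q - q * p = algebraMap R A c) (k m : ℕ) :
    ((LinearMap.mulLeft R p - LinearMap.mulRight R p) ^ k) (q ^ m)
      = ((m.descFactorial k : R) * c ^ k) • q ^ (m - k) := by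
  induction k generalizing m with
  | zero => simp
  | succ k ih =>
    rw [pow_succ, Module.End.mul_apply]
    rcases m with _ | m
    · simp
    · rw [LinearMap.sub_apply, LinearMap.mulLeft_apply, LinearMap.mulRight_apply,
        mul_pow_succ_sub_pow_succ_mul h, map_smul, ih, smul_smul, Nat.succ_descFactorial_succ,
        Nat.add_sub_add_right]
      push_cast
      ring_nf

theorem mulLeft_sub_mulRight_pow_apply_mul_pow (k j : ℕ) (x : A) :
    ((LinearMap.mulLeft R p - LinearMap.mulRight R p) ^ k) (x * p ^ j)
      = ((LinearMap.mulLeft R p - LinearMap.mulRight R p) ^ k) x * p ^ j := by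
  have hcomm : Commute (LinearMap.mulLeft R p - LinearMap.mulRight R p)
      (LinearMap.mulRight R (p ^ j)) := by
    refine (LinearMap.commute_mulLeft_right p _).sub_left ?_
    rw [← LinearMap.pow_mulRight]
    exact (Commute.refl _).pow_right j
  exact LinearMap.congr_fun (hcomm.pow_left k).eq x

theorem pow_mul_pow_eq_sum (h : p * q - q * p = algebraMap R A c) (n m : ℕ) :
    p ^ n * q ^ m = ∑ k ∈ range (n + 1),
      ((n.choose k * m.descFactorial k : R) * c ^ k) • (q ^ (m - k) * p ^ (n - k)) := by
  set D := LinearMap.mulLeft R p - LinearMap.mulRight R p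
  have hcomm : Commute D (LinearMap.mulRight R p) :=
    (LinearMap.commute_mulLeft_right p p).sub_left (Commute.refl _)
  calc p ^ n * q ^ m = ((D + LinearMap.mulRight R p) ^ n) (q ^ m) := by
        rw [sub_add_cancel, LinearMap.pow_mulLeft, LinearMap.mulLeft_apply]
    _ = _ := by
        rw [hcomm.add_pow, LinearMap.sum_apply]
        refine sum_congr rfl fun k _ => ?_
        rw [← Nat.cast_comm, ← nsmul_eq_mul, LinearMap.smul_apply, Module.End.mul_apply,
          LinearMap.pow_mulRight, LinearMap.mulRight_apply, mulLeft_sub_mulRight_pow_apply_mul_pow,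
          mulLeft_sub_mulRight_pow_apply_pow h, smul_mul_assoc, ← Nat.cast_smul_eq_nsmul R,
          smul_smul]
        ring_nf

end NormalOrdering

section DividedPowers

variable {K A : Type*} [Field K] [Ring A] [Algebra K A]

variable (K) in
def dividedPow (x : A) (n : ℕ) : A := (n ! : K)⁻¹ • x ^ n

theorem dividedPow_mul_dividedPow (x y : A) (i j : ℕ) :
    dividedPow K x i * dividedPow K y j = ((i ! * j ! : K)⁻¹) • (x ^ i * y ^ j) := by
  rw [dividedPow, dividedPow, smul_mul_smul_comm, mul_inv]

theorem smul_commutator_pow_eq_dividedPow (a : K) (x y : A) (i j : ℕ) :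
    (a * (i ! * j ! : K)⁻¹) • (x ^ i * y ^ j - y ^ j * x ^ i)
      = a • (dividedPow K x i * dividedPow K y j - dividedPow K y j * dividedPow K x i) := by
  rw [mul_smul, smul_sub, dividedPow_mul_dividedPow, dividedPow_mul_dividedPow, mul_comm (j ! : K)]

variable [CharZero K] {p q : A} {c : K}

theorem dividedPow_mul_dividedPow_eq_sum (h : p * q - q * p = algebraMap K A c) (n m : ℕ) :
    dividedPow K p n * dividedPow K q m = ∑ k ∈ Icc 0 (min m n),
      (c ^ k / k !) • (dividedPow K q (m - k) * dividedPow K p (n - k)) := by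
  rw [dividedPow_mul_dividedPow, pow_mul_pow_eq_sum h, smul_sum]
  symm
  refine sum_subset_zero_on_sdiff (fun k hk => ?_) (fun k hk => ?_) (fun k hk => ?_)
  · simp only [mem_Icc, mem_range] at hk ⊢; omega
  · have hmk : m < k := by simp only [mem_sdiff, mem_Icc, mem_range] at hk; omega
    simp [Nat.descFactorial_eq_zero_iff_lt.mpr hmk]
  · obtain ⟨hkm, hkn⟩ : k ≤ m ∧ k ≤ n := by simp only [mem_Icc] at hk; omega
    have hn : ((n.choose k * k ! * (n - k)! : ℕ) : K) = n ! := by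
      rw [Nat.choose_mul_factorial_mul_factorial hkn]
    have hm : (((m - k)! * m.descFactorial k : ℕ) : K) = m ! := by
      rw [Nat.factorial_mul_descFactorial hkm]
    rw [dividedPow_mul_dividedPow, smul_smul, smul_smul, ← hn, ← hm]
    have hchoose : (n.choose k : K) ≠ 0 := by exact_mod_cast (Nat.choose_pos hkn).ne'
    have hdesc : (m.descFactorial k : K) ≠ 0 := by
      rw [Nat.cast_ne_zero, Ne, Nat.descFactorial_eq_zero_iff_lt]; omega
    congr 1
    push_cast
    field_simp

theorem dividedPow_commutator_sub_eq_sum (h : p * q - q * p = algebraMap K A c) {m n s : ℕ}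
    (hs : s ≤ min m n) :
    dividedPow K p (n - s) * dividedPow K q (m - s) - dividedPow K q (m - s) * dividedPow K p (n - s)
      = ∑ t ∈ Ioc s (min m n),
          (c ^ (t - s) / (t - s)!) • (dividedPow K q (m - t) * dividedPow K p (n - t)) := by
  have hshift : ∑ k ∈ Icc 0 (min (m - s) (n - s)),
        (c ^ k / k !) • (dividedPow K q (m - s - k) * dividedPow K p (n - s - k))
      = ∑ t ∈ Icc s (min m n),
          (c ^ (t - s) / (t - s)!) • (dividedPow K q (m - t) * dividedPow K p (n - t)) := by
    refine sum_nbij' (· + s) (· - s) (fun k hk => ?_) (fun t ht => ?_) (fun k _ => ?_)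
      (fun t ht => ?_) (fun k _ => ?_)
    any_goals simp only [mem_Icc] at *; omega
    rw [Nat.add_sub_cancel, Nat.sub_sub, Nat.sub_sub, add_comm s k]
  rw [dividedPow_mul_dividedPow_eq_sum h, hshift, ← sum_Ioc_add_eq_sum_Icc hs]
  simp

theorem dividedPow_anticommutator_eq_sum (h : p * q - q * p = algebraMap K A c) (m n : ℕ) :
    dividedPow K p n * dividedPow K q m + dividedPow K q m * dividedPow K p n
      = (2 : K) • (dividedPow K q m * dividedPow K p n) + ∑ t ∈ Ioc 0 (min m n),
          (c ^ t / t !) • (dividedPow K q (m - t) * dividedPow K p (n - t)) := by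
  have hcomm := dividedPow_commutator_sub_eq_sum h (m := m) (n := n) (Nat.zero_le _)
  simp only [Nat.sub_zero] at hcomm
  rw [← hcomm]
  module

theorem smul_dividedPow_succ_commutator_eq (h : p * q - q * p = algebraMap K A c) (a : K)
    (m n : ℕ) :
    a • (dividedPow K p (n + 1) * dividedPow K q (m + 1)
        - dividedPow K q (m + 1) * dividedPow K p (n + 1))
      = (a * c) • (dividedPow K q m * dividedPow K p n) + ∑ t ∈ Ioc 0 (min m n),
          (a * (c ^ (t + 1) / (t + 1)!)) • (dividedPow K q (m - t) * dividedPow K p (n - t)) := by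
  have hcomm := dividedPow_commutator_sub_eq_sum h (m := m + 1) (n := n + 1) (Nat.zero_le _)
  rw [min_add_add_right, ← Icc_add_one_left_eq_Ioc, ← map_add_right_Icc, sum_map] at hcomm
  simp only [Nat.sub_zero, addRightEmbedding_apply, Nat.add_sub_add_right] at hcomm
  rw [hcomm, smul_sum, ← sum_Ioc_add_eq_sum_Icc (Nat.zero_le _), add_comm]
  simp [smul_smul]

theorem sum_smul_dividedPow_commutator_eq (h : p * q - q * p = algebraMap K A c) (b : ℕ → K)
    (m n : ℕ) :
    ∑ k ∈ Icc 1 (min m n), b k •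
        (dividedPow K p (n - k) * dividedPow K q (m - k)
          - dividedPow K q (m - k) * dividedPow K p (n - k))
      = ∑ t ∈ Ioc 0 (min m n), (∑ k ∈ Ico 1 t, b k * (c ^ (t - k) / (t - k)!)) •
          (dividedPow K q (m - t) * dividedPow K p (n - t)) := by
  calc _ = ∑ k ∈ Icc 1 (min m n), ∑ t ∈ Ioc k (min m n), (b k * (c ^ (t - k) / (t - k)!)) •
          (dividedPow K q (m - t) * dividedPow K p (n - t)) := by
        refine sum_congr rfl fun k hk => ?_
        rw [dividedPow_commutator_sub_eq_sum h (by simp only [mem_Icc] at hk; omega), smul_sum]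
        simp only [smul_smul]
    _ = _ := by
        rw [sum_comm' (t' := Ioc 0 (min m n)) (s' := fun t => Ico 1 t)
          (fun k t => by simp only [mem_Icc, mem_Ioc, mem_Ico]; omega)]
        simp only [sum_smul]

end DividedPowers

theorem pain_anticommutator_identity {A : Type*} [Ring A] [Algebra ℂ A]
    (p q : A) (c : ℂ) (hc : c ≠ 0) (h : p * q - q * p = algebraMap ℂ A c)
    (m n : ℕ) :
    (((n.factorial : ℂ) * (m.factorial : ℂ))⁻¹) • (p ^ n * q ^ m + q ^ m * p ^ n) =
      (2 / (c * ((n + 1).factorial : ℂ) * ((m + 1).factorial : ℂ))) •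
          (p ^ (n + 1) * q ^ (m + 1) - q ^ (m + 1) * p ^ (n + 1)) +
        ∑ k ∈ Finset.Icc 1 (min m n),
          (2 * c ^ k * ((bernoulli (k + 1) : ℚ) : ℂ) /
              ((k.factorial : ℂ) * ((k : ℂ) + 1) *
                ((n - k).factorial : ℂ) * ((m - k).factorial : ℂ))) •
            (p ^ (n - k) * q ^ (m - k) - q ^ (m - k) * p ^ (n - k)) := by
  have hscalar₁ : 2 / (c * ((n + 1)! : ℂ) * (m + 1)!) = 2 / c * ((n + 1)! * (m + 1)! : ℂ)⁻¹ := by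
    ring
  have hscalar₂ (k : ℕ) :
      2 * c ^ k * ((bernoulli (k + 1) : ℚ) : ℂ) / (k ! * (k + 1) * (n - k)! * (m - k)!)
        = 2 * c ^ k * ((bernoulli (k + 1) : ℚ) : ℂ) / (k ! * (k + 1))
          * ((n - k)! * (m - k)! : ℂ)⁻¹ := by
    simp only [div_eq_mul_inv, mul_inv]
    ring
  rw [smul_add, ← dividedPow_mul_dividedPow, mul_comm (n ! : ℂ), ← dividedPow_mul_dividedPow,
    dividedPow_anticommutator_eq_sum h, hscalar₁, smul_commutator_pow_eq_dividedPow,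
    smul_dividedPow_succ_commutator_eq h, div_mul_cancel₀ 2 hc]
  simp only [hscalar₂, smul_commutator_pow_eq_dividedPow]
  rw [sum_smul_dividedPow_commutator_eq h, add_assoc, ← sum_add_distrib]
  congr 1
  refine sum_congr rfl fun t ht => ?_
  rw [← add_smul, pow_div_factorial_eq_bernoulli_sum hc (mem_Ioc.mp ht).1]
end

section
/- For natural numbers m, n, l and any scalar z: \sum_{k=0}^{\min(m,n)} z^k \binom{m}{k} \binom{m-k+l}{n-k} = \sum_{k=0}^{\min(m,n)} (z+1)^k \binom{m}{k} \binom{l}{n-k}. -/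
/-!
Both sides are the coefficient of `X ^ n` in `(1 + (z + 1) X) ^ m (1 + X) ^ l`: expanding
`(1 + (z + 1) X) ^ m` directly gives the right-hand side, while writing
`1 + (z + 1) X = (1 + X) + z X` and expanding in powers of `z X` gives the left-hand side.
-/

open Finset Polynomial

theorem Polynomial.coeff_C_mul_X_pow_mul_one_add_X_pow {R : Type*} [Semiring R]
    (c : R) (k e n : ℕ) :
    (C c * X ^ k * (1 + X) ^ e).coeff n = if k ≤ n then c * e.choose (n - k) else 0 := by
  rw [mul_assoc, coeff_C_mul, coeff_X_pow_mul', coeff_one_add_X_pow]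
  split_ifs <;> simp

theorem Polynomial.C_mul_X_add_pow_mul {R : Type*} [CommSemiring R] (a : R) (p q : R[X])
    (m : ℕ) :
    (C a * X + p) ^ m * q =
      ∑ k ∈ range (m + 1), C (a ^ k * m.choose k) * X ^ k * (p ^ (m - k) * q) := by
  rw [add_pow, sum_mul]
  refine sum_congr rfl fun k _ => ?_
  simp only [map_mul, map_pow, map_natCast]
  ring

theorem Finset.range_min_succ_eq_filter (m n : ℕ) :
    range (min m n + 1) = (range (m + 1)).filter (· ≤ n) := by
  ext k
  simp only [mem_range, mem_filter]
  omega

theorem binomial_shift_identity {R : Type*} [CommRing R] (m n l : ℕ) (z : R) :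
    ∑ k ∈ Finset.range (min m n + 1),
        z ^ k * (m.choose k : R) * ((m - k + l).choose (n - k) : R) =
      ∑ k ∈ Finset.range (min m n + 1),
        (z + 1) ^ k * (m.choose k : R) * (l.choose (n - k) : R) := by
  have hP : (C z * X + (1 + X)) ^ m * (1 + X) ^ l = (C (z + 1) * X + 1) ^ m * (1 + X) ^ l := by
    rw [C_add, C_1]
    ring
  have hcoeff := congrArg (coeff · n) hP
  simp only [C_mul_X_add_pow_mul, ← pow_add, one_pow, one_mul, finsetSum_coeff,
    coeff_C_mul_X_pow_mul_one_add_X_pow] at hcoeff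
  rw [range_min_succ_eq_filter, sum_filter, sum_filter]
  exact hcoeff
end

section
/- For natural numbers m, n, l: \sum_{k=0}^{\min(m,n)} E_k(z) \binom{m}{k} \binom{m-k+l}{n-k} = \sum_{k=0}^{\min(m,n)} E_k(z+1) \binom{m}{k} \binom{l}{n-k}, as an identity of polynomials in z, where E_k are the Euler polynomials. -/
/-!
The recursion defining `eulerPoly` says `E_n + ∑_{k ≤ n} C(n,k) E_k = 2 X^n`; by strong induction
this gives `E_n(X + 1) + E_n = 2 X^n`, and comparing the two shows that the Euler polynomials
form an Appell sequence: `E_k(X + 1) = ∑_j C(k,j) E_j`. Substituting this on the right-hand side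
and exchanging the sums, the coefficient of `E_j` becomes
`∑_k C(m,k) C(k,j) C(l,n-k) = C(m,j) ∑_i C(m-j,i) C(l,n-j-i) = C(m,j) C(m-j+l,n-j)`
by trinomial revision and Vandermonde's identity.
-/

open Polynomial Finset

theorem eulerPoly_add_sum_choose_smul (n : ℕ) :
    eulerPoly n + ∑ k ∈ range (n + 1), (n.choose k : ℚ) • eulerPoly k = 2 * X ^ n := by
  have hdef : eulerPoly n = X ^ n - C (1 / 2 : ℚ) *
      ∑ k ∈ range n, C (n.choose k : ℚ) * eulerPoly k := by
    rw [eulerPoly, WellFounded.fix_eq, ← Fin.sum_univ_eq_sum_range]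
  have hC : C (1 / 2 : ℚ) * 2 = 1 := by rw [← C_ofNat, ← C_mul]; norm_num
  simp only [sum_range_succ, Nat.choose_self, Nat.cast_one, smul_eq_C_mul, C_1, one_mul]
  linear_combination (2 : ℚ[X]) * hdef - (∑ k ∈ range n, C (n.choose k : ℚ) * eulerPoly k) * hC

theorem eulerPoly_comp_X_add_one_add (n : ℕ) :
    (eulerPoly n).comp (X + 1) + eulerPoly n = 2 * X ^ n := by
  induction n using Nat.strong_induction_on with
  | _ n ih =>
    have hshift := congrArg (·.comp (X + 1)) (eulerPoly_add_sum_choose_smul n)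
    simp only [add_comp, Polynomial.sum_comp, smul_comp, mul_comp, ofNat_comp, pow_comp, X_comp,
      sum_range_succ, Nat.choose_self, Nat.cast_one, one_smul] at hshift
    have hsum : ∑ k ∈ range n, (n.choose k : ℚ) • (eulerPoly k).comp (X + 1) =
        2 * ∑ k ∈ range n, (n.choose k : ℚ) • X ^ k -
          ∑ k ∈ range n, (n.choose k : ℚ) • eulerPoly k := by
      rw [mul_sum, ← sum_sub_distrib]
      refine sum_congr rfl fun k hk => ?_
      rw [eq_sub_of_add_eq (ih k (mem_range.mp hk)), smul_sub, mul_smul_comm]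
    have hbinom : (X + 1 : ℚ[X]) ^ n = ∑ k ∈ range n, (n.choose k : ℚ) • X ^ k + X ^ n := by
      rw [add_pow, sum_range_succ]
      simp [Nat.cast_smul_eq_nsmul, nsmul_eq_mul, mul_comm]
    have hE := eulerPoly_add_sum_choose_smul n
    simp only [sum_range_succ, Nat.choose_self, Nat.cast_one, one_smul] at hE
    rw [hsum, hbinom] at hshift
    refine mul_left_cancel₀ (two_ne_zero : (2 : ℚ[X]) ≠ 0) ?_
    linear_combination hshift + hE

theorem eulerPoly_comp_X_add_one (n : ℕ) :
    (eulerPoly n).comp (X + 1) = ∑ k ∈ range (n + 1), (n.choose k : ℚ) • eulerPoly k := by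
  linear_combination eulerPoly_comp_X_add_one_add n - eulerPoly_add_sum_choose_smul n

theorem eulerPoly_comp_X_add_one_of_le {n N : ℕ} (h : n ≤ N) :
    (eulerPoly n).comp (X + 1) = ∑ k ∈ range (N + 1), (n.choose k : ℚ) • eulerPoly k := by
  rw [eulerPoly_comp_X_add_one]
  refine sum_subset (range_subset_range.mpr (by omega)) fun k _ hk => ?_
  rw [Nat.choose_eq_zero_of_lt (by simpa using hk), Nat.cast_zero, zero_smul]

theorem Nat.sum_range_choose_mul_choose_mul_choose {m n j : ℕ} (l : ℕ) (hj : j ≤ n) :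
    ∑ k ∈ range (n + 1), m.choose k * k.choose j * l.choose (n - k) =
      m.choose j * (m - j + l).choose (n - j) := by
  obtain ⟨d, rfl⟩ := Nat.exists_eq_add_of_le hj
  rw [add_assoc, sum_range_add, sum_eq_zero fun k hk => by
    rw [Nat.choose_eq_zero_of_lt (mem_range.mp hk), mul_zero, zero_mul], zero_add,
    Nat.add_sub_cancel_left, Nat.add_choose_eq, Nat.sum_antidiagonal_eq_sum_range_succ_mk,
    mul_sum]
  refine sum_congr rfl fun i _ => ?_
  rw [Nat.choose_mul (Nat.le_add_right j i), Nat.add_sub_cancel_left, Nat.add_sub_add_left,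
    mul_assoc]

theorem sum_range_min_succ_eq {M : Type*} [AddCommMonoid M] {m : ℕ} (n : ℕ) {f : ℕ → M}
    (hf : ∀ k, m < k → f k = 0) :
    ∑ k ∈ range (min m n + 1), f k = ∑ k ∈ range (n + 1), f k :=
  sum_subset (range_subset_range.mpr (by omega)) fun k hk hk' =>
    hf k (by rw [mem_range] at hk hk'; omega)

theorem eulerPoly_binomial_shift_identity (m n l : ℕ) :
    ∑ k ∈ Finset.range (min m n + 1),
        ((m.choose k : ℚ) * ((m - k + l).choose (n - k) : ℚ)) • eulerPoly k =
      ∑ k ∈ Finset.range (min m n + 1),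
        ((m.choose k : ℚ) * (l.choose (n - k) : ℚ)) •
          (eulerPoly k).comp (Polynomial.X + 1) := by
  have hshift : ∀ k ∈ range (n + 1),
      ((m.choose k : ℚ) * (l.choose (n - k) : ℚ)) • (eulerPoly k).comp (X + 1) =
        ∑ j ∈ range (n + 1), ((m.choose k : ℚ) * (l.choose (n - k) : ℚ) * (k.choose j : ℚ)) •
          eulerPoly j := by
    intro k hk
    rw [eulerPoly_comp_X_add_one_of_le (mem_range_succ_iff.mp hk), smul_sum]
    simp_rw [smul_smul]
  have hvanish : ∀ {g : ℕ → ℚ} {p : ℕ → ℚ[X]} k, m < k → ((m.choose k : ℚ) * g k) • p k = 0 :=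
    fun k hk => by rw [Nat.choose_eq_zero_of_lt hk, Nat.cast_zero, zero_mul, zero_smul]
  rw [sum_range_min_succ_eq n (hvanish (p := eulerPoly)), sum_range_min_succ_eq n hvanish,
    sum_congr rfl hshift, sum_comm]
  refine sum_congr rfl fun j hj => ?_
  rw [← sum_smul, ← Nat.cast_mul,
    ← Nat.sum_range_choose_mul_choose_mul_choose l (mem_range_succ_iff.mp hj), Nat.cast_sum]
  exact congrArg (· • eulerPoly j) (sum_congr rfl fun k _ => by push_cast; ring)
end

section
/- For natural numbers m, n, l: \binom{m+l}{n} - \binom{l}{n} = -\sum_{k=1}^{\min(m,n)} E_k(0) \binom{m}{k} (\binom{m-k+l}{n-k} + \binom{l}{n-k}). -/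
open Finset Polynomial

lemma eulerPoly_eq (n : ℕ) :
    eulerPoly n = X ^ n - C (1 / 2 : ℚ) * ∑ k ∈ range n, C (n.choose k : ℚ) * eulerPoly k := by
  rw [← Fin.sum_univ_eq_sum_range (fun k => C (n.choose k : ℚ) * eulerPoly k)]
  exact WellFounded.fix_eq _ _ _

lemma eulerPoly_zero : eulerPoly 0 = 1 := by
  simp [eulerPoly_eq 0]

lemma sum_choose_mul_eulerPoly_eval_zero_add (i : ℕ) :
    ∑ k ∈ range (i + 1), (i.choose k : ℚ) * (eulerPoly k).eval 0 + (eulerPoly i).eval 0 =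
      if i = 0 then 2 else 0 := by
  rcases eq_or_ne i 0 with rfl | hi
  · norm_num [eulerPoly_zero]
  have h := congrArg (eval 0) (eulerPoly_eq i)
  simp only [eval_sub, eval_mul, eval_pow, eval_X, eval_C, eval_finsetSum, zero_pow hi] at h
  rw [sum_range_succ, Nat.choose_self, Nat.cast_one, one_mul, if_neg hi]
  linarith

lemma sum_range_ite_le {M : Type*} [AddCommMonoid M] (f : ℕ → M) (m n : ℕ) :
    ∑ k ∈ range (m + 1), (if k ≤ n then f k else 0) = ∑ k ∈ range (min m n + 1), f k := by
  rw [← sum_filter]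
  congr 1
  ext k
  simp only [mem_filter, mem_range]
  omega

lemma coeff_X_pow_mul_one_add_X_pow {R : Type*} [Semiring R] (k a n : ℕ) :
    (X ^ k * (1 + X) ^ a : R[X]).coeff n = if k ≤ n then (a.choose (n - k) : R) else 0 := by
  rw [coeff_X_pow_mul', coeff_one_add_X_pow]

lemma sum_eulerPoly_eval_zero_mul_X_pow_mul_one_add_X_pow_add_one (m : ℕ) :
    ∑ k ∈ range (m + 1), C ((eulerPoly k).eval 0 * m.choose k) * (X ^ k * ((1 + X) ^ (m - k) + 1)) =
      C 2 := by
  set e : ℕ → ℚ := fun k => (eulerPoly k).eval 0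
  ext i
  have hterm : ∀ k ∈ range (m + 1),
      (C (e k * m.choose k) * (X ^ k * ((1 + X) ^ (m - k) + 1))).coeff i =
        (if k ≤ i then (m.choose i : ℚ) * (i.choose k * e k) else 0) +
          if i = k then e i * m.choose i else 0 := by
    intro k _
    rw [coeff_C_mul, mul_add, coeff_add, coeff_X_pow_mul_one_add_X_pow, mul_one, coeff_X_pow]
    by_cases hki : k ≤ i
    · have hchoose : (m.choose k : ℚ) * (m - k).choose (i - k) = m.choose i * i.choose k := by
        exact_mod_cast (Nat.choose_mul hki).symm
      split_ifs with hik
      · subst hik; linear_combination e i * hchoose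
      · linear_combination e k * hchoose
    · have hik : i ≠ k := by omega
      simp only [hki, hik, if_false, add_zero, mul_zero]
  rw [finsetSum_coeff, sum_congr rfl hterm, sum_add_distrib, sum_range_ite_le, sum_ite_eq,
    ← mul_sum, coeff_C]
  rcases le_or_gt i m with him | hmi
  · rw [min_eq_right him, if_pos (mem_range.2 (by omega)), mul_comm (e i), ← mul_add,
      sum_choose_mul_eulerPoly_eval_zero_add]
    split_ifs with hi <;> simp [hi]
  · rw [Nat.choose_eq_zero_of_lt hmi, if_neg (by rw [mem_range]; omega), if_neg (by omega)]
    simp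

theorem binomial_diff_euler_identity (m n l : ℕ) :
    ((m + l).choose n : ℚ) - (l.choose n : ℚ) =
      - ∑ k ∈ Finset.Icc 1 (min m n),
          (eulerPoly k).eval 0 * (m.choose k : ℚ) *
            (((m - k + l).choose (n - k) : ℚ) + (l.choose (n - k) : ℚ)) := by
  set f : ℕ → ℚ := fun k => (eulerPoly k).eval 0 * (m.choose k : ℚ) *
    (((m - k + l).choose (n - k) : ℚ) + (l.choose (n - k) : ℚ))
  have hpoly : ∑ k ∈ range (m + 1), C ((eulerPoly k).eval 0 * m.choose k) *
      (X ^ k * ((1 + X) ^ (m - k + l) + (1 + X) ^ l)) = C 2 * (1 + X) ^ l := by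
    rw [← sum_eulerPoly_eval_zero_mul_X_pow_mul_one_add_X_pow_add_one, sum_mul]
    refine sum_congr rfl fun k _ => ?_
    rw [pow_add]
    ring
  have hcoeff : ∑ k ∈ range (min m n + 1), f k = 2 * l.choose n := by
    have h := congrArg (coeff · n) hpoly
    simp only [finsetSum_coeff, coeff_C_mul, mul_add, coeff_add, coeff_X_pow_mul_one_add_X_pow,
      coeff_one_add_X_pow] at h
    rw [← sum_range_ite_le, ← h]
    refine sum_congr rfl fun k _ => ?_
    split_ifs <;> ring
  have hf0 : f 0 = (m + l).choose n + l.choose n := by simp [f, eulerPoly_zero]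
  rw [sum_range_eq_add_Ico f (by omega), Ico_add_one_right_eq_Icc, hf0] at hcoeff
  linarith
end
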